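/- arXiv:1506.00530 — 3 statements merged into one kernel-verified Lean document; each statement's English description precedes it below -/
import Mathlib

section
/- Lemma 2: let w be a function from the finite subsets of ℤ^d to [0,∞) with w(∅) = 0, let l'' > 0, let g − g' > 0, set 1/l := log 2 + 1/l'', and assume |||w|||_l := sup_{x∈ℤ^d} Σ_{Γ∋x} e^{|Γ|/l} w(Γ) ≤ ε for some ε with 0 < ε < g − g'; put K := (g−g')/(g−g'−ε). Then for every nonempty finite X ⊂ ℤ^d the sum over all n ≥ 1 and over all tuples (Γ_1,…,Γ_n, E_1,…,E_{n+1}) of finite subsets of ℤ^d — with Γ_i and E_i nonempty for 1 ≤ i ≤ n, E_{n+1} possibly empty, satisfying E_1 ⊆ X and, for each 1 ≤ i ≤ n, E_i ∩ Γ_i ≠ ∅ and E_{i+1}∖Γ_i = E_i∖Γ_i — of the products ∏_{i=1}^n e^{|Γ_i|/l''} w(Γ_i) / ((g−g') |E_i|) is summable and bounded above by (K−1) · 2^{|X|}. -/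
/-!
Work in `ℝ≥0∞`, where every sum exists. A tuple is a path `E₁ → E₂ → ⋯ → E_{n+1}` whose `i`-th
step is labelled by `Γ_i`. From any `E`, the total weight of one step is at most
`δ = ε / (g - g')`: for fixed `Γ` at most `2^|Γ|` sets `E'` agree with `E` off `Γ`, the factor
`2^|Γ|` turns `e^{|Γ|/l''}` into `e^{|Γ|/l}`, and a `Γ` meeting `E` contains one of its `|E|`
points, which cancels the factor `1/|E|`. Hence the paths of `n` steps starting inside `X` weigh
at most `2^|X| δ^n`, and the geometric series gives `2^|X| δ / (1 - δ) = (K - 1) 2^|X|`.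
-/

noncomputable section

namespace QMS

abbrev Site (d : ℕ) : Type := Fin d → ℤ

/-- The labels of the expansion: a number `p.1 + 1 ≥ 1` of sets `Γ_1, …, Γ_n` together
with sets `E_1, …, E_{n+1}` (with `Γ_i, E_i` nonempty for `i ≤ n`, `E_{n+1}` arbitrary),
satisfying the compatibility constraints of observation (i): `E_1 ⊆ X`, and for every
`1 ≤ i ≤ n` one has `E_i ∩ Γ_i ≠ ∅` and `E_{i+1} ∖ Γ_i = E_i ∖ Γ_i`. -/
def Tuples (d : ℕ) (X : Finset (Site d)) : Type :=
  {p : (n : ℕ) × ((Fin (n + 1) → Finset (Site d)) × (Fin (n + 2) → Finset (Site d))) //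
    (∀ i, (p.2.1 i).Nonempty) ∧
    (∀ i : Fin (p.1 + 1), (p.2.2 i.castSucc).Nonempty) ∧
    p.2.2 0 ⊆ X ∧
    (∀ i : Fin (p.1 + 1), (p.2.2 i.castSucc ∩ p.2.1 i).Nonempty) ∧
    (∀ i : Fin (p.1 + 1), p.2.2 i.succ \ p.2.1 i = p.2.2 i.castSucc \ p.2.1 i) }

open scoped ENNReal

section PathWeight

variable {β τ : Type*}

def pathWeight (K : β → τ → β → ℝ≥0∞) {n : ℕ} (t : Fin n → τ) (y : Fin (n + 1) → β) : ℝ≥0∞ :=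
  ∏ i, K (y i.castSucc) (t i) (y i.succ)

theorem pathWeight_snoc (K : β → τ → β → ℝ≥0∞) {n : ℕ} (t : Fin n → τ) (y : Fin (n + 1) → β)
    (t' : τ) (y' : β) :
    pathWeight K (Fin.snoc t t' : Fin (n + 1) → τ) (Fin.snoc y y' : Fin (n + 2) → β) =
      pathWeight K t y * K (y (Fin.last n)) t' y' := by
  simp [pathWeight, Fin.prod_univ_castSucc, ← Fin.castSucc_succ]

def pathSnocEquiv (n : ℕ) :
    ((Fin n → τ) × (Fin (n + 1) → β)) × (τ × β) ≃ (Fin (n + 1) → τ) × (Fin (n + 2) → β) where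
  toFun q := (Fin.snoc q.1.1 q.2.1, Fin.snoc q.1.2 q.2.2)
  invFun p := ((Fin.init p.1, Fin.init p.2), (p.1 (Fin.last n), p.2 (Fin.last (n + 1))))
  left_inv q := by simp
  right_inv p := by simp

theorem tsum_pathWeight_le (K : β → τ → β → ℝ≥0∞) {δ : ℝ≥0∞}
    (hK : ∀ x, ∑' q : τ × β, K x q.1 q.2 ≤ δ) (f : β → ℝ≥0∞) (n : ℕ) :
    ∑' p : (Fin n → τ) × (Fin (n + 1) → β), f (p.2 0) * pathWeight K p.1 p.2 ≤
      (∑' x, f x) * δ ^ n := by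
  induction n with
  | zero =>
    rw [pow_zero, mul_one,
      ← ((Equiv.uniqueProd _ _).trans (Equiv.funUnique (Fin 1) β)).symm.tsum_eq]
    simp [pathWeight]
  | succ n ih =>
    calc ∑' p : (Fin (n + 1) → τ) × (Fin (n + 2) → β), f (p.2 0) * pathWeight K p.1 p.2
        = ∑' p : (Fin n → τ) × (Fin (n + 1) → β), f (p.2 0) * pathWeight K p.1 p.2 *
            ∑' q : τ × β, K (p.2 (Fin.last n)) q.1 q.2 := by
          rw [← (pathSnocEquiv n).tsum_eq, ENNReal.tsum_prod']
          refine tsum_congr fun p => ?_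
          simp [pathSnocEquiv, pathWeight_snoc, mul_assoc, ENNReal.tsum_mul_left]
      _ ≤ ∑' p : (Fin n → τ) × (Fin (n + 1) → β), f (p.2 0) * pathWeight K p.1 p.2 * δ := by
          gcongr; exact hK _
      _ ≤ (∑' x, f x) * δ ^ n * δ := by rw [ENNReal.tsum_mul_right]; gcongr
      _ = (∑' x, f x) * δ ^ (n + 1) := by rw [mul_assoc, pow_succ]

theorem tsum_sigma_pathWeight_le (K : β → τ → β → ℝ≥0∞) {δ : ℝ≥0∞}
    (hK : ∀ x, ∑' q : τ × β, K x q.1 q.2 ≤ δ) (f : β → ℝ≥0∞) :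
    ∑' q : (n : ℕ) × ((Fin (n + 1) → τ) × (Fin (n + 2) → β)),
        f (q.2.2 0) * pathWeight K q.2.1 q.2.2 ≤
      (∑' x, f x) * ∑' n : ℕ, δ ^ (n + 1) := by
  rw [ENNReal.tsum_sigma', ← ENNReal.tsum_mul_left]
  exact ENNReal.tsum_le_tsum fun n => tsum_pathWeight_le K hK f (n + 1)

end PathWeight

section StepWeight

variable {α : Type*} [DecidableEq α]

def stepWeight (a : Finset α → ℝ≥0∞) (E γ E' : Finset α) : ℝ≥0∞ :=
  if (E ∩ γ).Nonempty ∧ E' \ γ = E \ γ then a γ / E.card else 0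

theorem tsum_ite_subset (X : Finset α) :
    ∑' s : Finset α, (if s ⊆ X then 1 else 0 : ℝ≥0∞) = 2 ^ X.card := by
  rw [tsum_eq_sum (s := X.powerset) fun s hs => if_neg (by simpa using hs),
    Finset.sum_ite_of_true fun s hs => Finset.mem_powerset.1 hs]
  simp

theorem tsum_ite_sdiff_eq_le (E γ : Finset α) (c : ℝ≥0∞) :
    ∑' E' : Finset α, (if E' \ γ = E \ γ then c else 0) ≤ 2 ^ γ.card * c := by
  set S := γ.powerset.image (· ∪ E \ γ)
  have hS : ∀ E' ∉ S, (if E' \ γ = E \ γ then c else 0) = 0 := by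
    intro E' hE'
    refine if_neg fun h => hE' (Finset.mem_image.2 ⟨E' ∩ γ, by simp, ?_⟩)
    rw [← h, Finset.union_comm, Finset.sdiff_union_inter]
  calc ∑' E' : Finset α, (if E' \ γ = E \ γ then c else 0)
      = ∑ E' ∈ S, (if E' \ γ = E \ γ then c else 0) := tsum_eq_sum hS
    _ ≤ ∑ _E' ∈ S, c := Finset.sum_le_sum fun _ _ => by split_ifs <;> simp
    _ ≤ 2 ^ γ.card * c := by
        rw [Finset.sum_const, nsmul_eq_mul]
        gcongr
        exact_mod_cast Finset.card_image_le.trans_eq (Finset.card_powerset γ)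

theorem tsum_ite_inter_nonempty_le (E : Finset α) (F : Finset α → ℝ≥0∞) :
    ∑' γ, (if (E ∩ γ).Nonempty then F γ else 0) ≤
      ∑ x ∈ E, ∑' γ : {γ : Finset α // x ∈ γ}, F γ := by
  calc ∑' γ, (if (E ∩ γ).Nonempty then F γ else 0)
      ≤ ∑' γ, ∑ x ∈ E, if x ∈ γ then F γ else 0 := by
        refine ENNReal.tsum_le_tsum fun γ => ?_
        split_ifs with h
        · obtain ⟨x, hx⟩ := h
          rw [Finset.mem_inter] at hx
          calc F γ = if x ∈ γ then F γ else 0 := (if_pos hx.2).symm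
            _ ≤ _ := Finset.single_le_sum (f := fun y => if y ∈ γ then F γ else 0)
                (fun _ _ => zero_le) hx.1
        · exact zero_le
    _ = ∑ x ∈ E, ∑' γ : {γ : Finset α // x ∈ γ}, F γ := by
        rw [Summable.tsum_finsetSum fun _ _ => ENNReal.summable]
        refine Finset.sum_congr rfl fun x _ => ?_
        refine (tsum_congr fun γ => ?_).trans (tsum_subtype {γ | x ∈ γ} F).symm
        simp [Set.indicator_apply]

theorem tsum_stepWeight_le (a : Finset α → ℝ≥0∞) {δ : ℝ≥0∞}
    (ha : ∀ x, ∑' γ : {γ : Finset α // x ∈ γ}, 2 ^ γ.1.card * a γ ≤ δ) (E : Finset α) :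
    ∑' q : Finset α × Finset α, stepWeight a E q.1 q.2 ≤ δ := by
  calc ∑' q : Finset α × Finset α, stepWeight a E q.1 q.2
      = ∑' γ, if (E ∩ γ).Nonempty then
          ∑' E', (if E' \ γ = E \ γ then a γ / E.card else 0) else 0 := by
        rw [ENNReal.tsum_prod]
        refine tsum_congr fun γ => ?_
        by_cases h : (E ∩ γ).Nonempty <;> simp [stepWeight, h]
    _ ≤ ∑' γ, if (E ∩ γ).Nonempty then 2 ^ γ.card * a γ * (E.card : ℝ≥0∞)⁻¹ else 0 := by
        refine ENNReal.tsum_le_tsum fun γ => ?_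
        split_ifs
        · rw [mul_assoc, ← div_eq_mul_inv]
          exact tsum_ite_sdiff_eq_le E γ _
        · rfl
    _ ≤ ∑ x ∈ E, ∑' γ : {γ : Finset α // x ∈ γ}, 2 ^ γ.1.card * a γ * (E.card : ℝ≥0∞)⁻¹ :=
        tsum_ite_inter_nonempty_le E _
    _ ≤ ∑ _x ∈ E, δ * (E.card : ℝ≥0∞)⁻¹ := by
        gcongr with x
        rw [ENNReal.tsum_mul_right]
        gcongr
        exact ha x
    _ = δ * ((E.card : ℝ≥0∞) * (E.card : ℝ≥0∞)⁻¹) := by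
        rw [Finset.sum_const, nsmul_eq_mul]
        ring
    _ ≤ δ := mul_le_of_le_one_right' (ENNReal.mul_inv_le_one _)

end StepWeight

section RealWeights

theorem exp_div_eq_two_pow_mul {l l'' : ℝ} (hl : 1 / l = Real.log 2 + 1 / l'') (n : ℕ) :
    Real.exp (n / l) = 2 ^ n * Real.exp (n / l'') := by
  rw [div_eq_mul_one_div, hl, mul_add, Real.exp_add, Real.exp_nat_mul,
    Real.exp_log two_pos, ← div_eq_mul_one_div]

theorem tsum_two_pow_mul_ofReal_le {α : Type*} {w : Finset α → ℝ} (hw : ∀ Γ, 0 ≤ w Γ)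
    {l l'' ε c : ℝ} (hl : 1 / l = Real.log 2 + 1 / l'') (hc : 0 ≤ c) {x : α}
    (hsummable : Summable fun Γ : {Γ : Finset α // x ∈ Γ} =>
      Real.exp ((Γ.1.card : ℝ) / l) * w Γ.1)
    (hnorm : ∑' Γ : {Γ : Finset α // x ∈ Γ}, Real.exp ((Γ.1.card : ℝ) / l) * w Γ.1 ≤ ε) :
    ∑' Γ : {Γ : Finset α // x ∈ Γ},
        2 ^ Γ.1.card * ENNReal.ofReal (Real.exp (Γ.1.card / l'') * w Γ / c) ≤
      ENNReal.ofReal (ε / c) := by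
  have hterm : ∀ Γ : Finset α,
      2 ^ Γ.card * ENNReal.ofReal (Real.exp (Γ.card / l'') * w Γ / c) =
        ENNReal.ofReal (Real.exp (Γ.card / l) * w Γ / c) := by
    intro Γ
    rw [exp_div_eq_two_pow_mul hl, ← ENNReal.ofReal_ofNat 2, ← ENNReal.ofReal_pow zero_le_two,
      ← ENNReal.ofReal_mul (by positivity)]
    ring_nf
  have hnonneg : ∀ Γ : {Γ : Finset α // x ∈ Γ}, 0 ≤ Real.exp (Γ.1.card / l) * w Γ / c :=
    fun Γ => div_nonneg (mul_nonneg (Real.exp_pos _).le (hw _)) hc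
  calc ∑' Γ : {Γ : Finset α // x ∈ Γ},
        2 ^ Γ.1.card * ENNReal.ofReal (Real.exp (Γ.1.card / l'') * w Γ / c)
      = ∑' Γ : {Γ : Finset α // x ∈ Γ}, ENNReal.ofReal (Real.exp (Γ.1.card / l) * w Γ / c) :=
        tsum_congr fun Γ => hterm Γ
    _ = ENNReal.ofReal (∑' Γ : {Γ : Finset α // x ∈ Γ}, Real.exp (Γ.1.card / l) * w Γ / c) :=
        (ENNReal.ofReal_tsum_of_nonneg hnonneg (hsummable.div_const c)).symm
    _ ≤ ENNReal.ofReal (ε / c) := by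
        rw [tsum_div_const]
        exact ENNReal.ofReal_le_ofReal (div_le_div_of_nonneg_right hnorm hc)

theorem tsum_ofReal_pow_succ {ρ : ℝ} (h0 : 0 ≤ ρ) (h1 : ρ < 1) :
    ∑' n : ℕ, ENNReal.ofReal ρ ^ (n + 1) = ENNReal.ofReal (ρ / (1 - ρ)) := by
  have hsum : Summable fun n : ℕ => ρ ^ (n + 1) :=
    (summable_geometric_of_lt_one h0 h1).mul_left ρ |>.congr fun n => (pow_succ' ρ n).symm
  simp_rw [← ENNReal.ofReal_pow h0]
  rw [← ENNReal.ofReal_tsum_of_nonneg (fun n => pow_nonneg h0 _) hsum]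
  simp_rw [pow_succ']
  rw [tsum_mul_left, tsum_geometric_of_lt_one h0 h1, div_eq_mul_inv]

theorem summable_and_tsum_le_of_tsum_ofReal_le {ι : Type*} {f : ι → ℝ} {B : ℝ}
    (hf : ∀ i, 0 ≤ f i) (hB : 0 ≤ B) (h : ∑' i, ENNReal.ofReal (f i) ≤ ENNReal.ofReal B) :
    Summable f ∧ ∑' i, f i ≤ B := by
  have hs : Summable f := by
    simpa [ENNReal.toReal_ofReal (hf _)] using
      ENNReal.summable_toReal (h.trans_lt ENNReal.ofReal_lt_top).ne
  refine ⟨hs, ?_⟩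
  rwa [← ENNReal.ofReal_tsum_of_nonneg hf hs, ENNReal.ofReal_le_ofReal_iff hB] at h

end RealWeights

section Tuples

variable {d : ℕ} {X : Finset (Site d)}

def tupleWeight (w : Finset (Site d) → ℝ) (l'' c : ℝ) (p : Tuples d X) : ℝ :=
  ∏ i : Fin (p.1.1 + 1),
    Real.exp ((p.1.2.1 i).card / l'') * w (p.1.2.1 i) / (c * ((p.1.2.2 i.castSucc).card : ℝ))

theorem tupleWeight_nonneg {w : Finset (Site d) → ℝ} (hw : ∀ Γ, 0 ≤ w Γ) (l'' : ℝ) {c : ℝ}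
    (hc : 0 ≤ c) (p : Tuples d X) : 0 ≤ tupleWeight w l'' c p :=
  Finset.prod_nonneg fun _ _ =>
    div_nonneg (mul_nonneg (Real.exp_pos _).le (hw _)) (mul_nonneg hc (Nat.cast_nonneg _))

theorem ofReal_tupleWeight {w : Finset (Site d) → ℝ} (hw : ∀ Γ, 0 ≤ w Γ) (l'' : ℝ) {c : ℝ}
    (hc : 0 < c) (p : Tuples d X) :
    ENNReal.ofReal (tupleWeight w l'' c p) =
      (if p.1.2.2 0 ⊆ X then 1 else 0) *
        pathWeight (stepWeight fun Γ => ENNReal.ofReal (Real.exp (Γ.card / l'') * w Γ / c))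
          p.1.2.1 p.1.2.2 := by
  obtain ⟨⟨n, Γ, E⟩, -, -, hX, hmeet, hstep⟩ := p
  simp only [tupleWeight, pathWeight]
  rw [if_pos hX, one_mul, ENNReal.ofReal_prod_of_nonneg fun i _ =>
      div_nonneg (mul_nonneg (Real.exp_pos _).le (hw _)) (by positivity)]
  refine Finset.prod_congr rfl fun i _ => ?_
  have hE : 0 < (E i.castSucc).card :=
    ((hmeet i).mono Finset.inter_subset_left).card_pos
  rw [stepWeight, if_pos ⟨hmeet i, hstep i⟩, ← div_div,
    ENNReal.ofReal_div_of_pos (by exact_mod_cast hE), ENNReal.ofReal_natCast]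

end Tuples

theorem lemma_two_general (d : ℕ)
    (w : Finset (Site d) → ℝ) (hw : ∀ Γ, 0 ≤ w Γ)
    (l'' l g g' ε : ℝ) (hgg' : g' < g)
    (hl : 1 / l = Real.log 2 + 1 / l'')
    (hε : 0 < ε) (hεg : ε < g - g')
    (hsummable : ∀ x : Site d, Summable fun Γ : {Γ : Finset (Site d) // x ∈ Γ} =>
      Real.exp ((Γ.1.card : ℝ) / l) * w Γ.1)
    (hnorm : ∀ x : Site d,
      (∑' Γ : {Γ : Finset (Site d) // x ∈ Γ}, Real.exp ((Γ.1.card : ℝ) / l) * w Γ.1) ≤ ε) :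
    ∀ X : Finset (Site d), X.Nonempty →
      Summable (fun p : Tuples d X =>
        ∏ i : Fin (p.1.1 + 1),
          Real.exp ((p.1.2.1 i).card / l'') * w (p.1.2.1 i) /
            ((g - g') * ((p.1.2.2 i.castSucc).card : ℝ))) ∧
      (∑' p : Tuples d X,
        ∏ i : Fin (p.1.1 + 1),
          Real.exp ((p.1.2.1 i).card / l'') * w (p.1.2.1 i) /
            ((g - g') * ((p.1.2.2 i.castSucc).card : ℝ))) ≤
        ((g - g') / (g - g' - ε) - 1) * 2 ^ X.card := by
  intro X _
  have hgap : 0 < g - g' := sub_pos.2 hgg'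
  have hK : ε / (g - g') / (1 - ε / (g - g')) = (g - g') / (g - g' - ε) - 1 := by
    have : g - g' - ε ≠ 0 := (sub_pos.2 hεg).ne'
    field_simp
    ring
  have hρ0 : 0 ≤ ε / (g - g') := div_nonneg hε.le hgap.le
  have hρ1 : ε / (g - g') < 1 := (div_lt_one hgap).2 hεg
  set a : Finset (Site d) → ℝ≥0∞ := fun Γ =>
    ENNReal.ofReal (Real.exp (Γ.card / l'') * w Γ / (g - g'))
  have hstep := tsum_stepWeight_le a fun x =>
    tsum_two_pow_mul_ofReal_le hw hl hgap.le (hsummable x) (hnorm x)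
  have hpaths := tsum_sigma_pathWeight_le _ hstep fun s => if s ⊆ X then 1 else 0
  rw [tsum_ite_subset, tsum_ofReal_pow_succ hρ0 hρ1, hK] at hpaths
  refine summable_and_tsum_le_of_tsum_ofReal_le (tupleWeight_nonneg hw l'' hgap.le)
    (mul_nonneg (hK ▸ div_nonneg hρ0 (sub_nonneg.2 hρ1.le)) (by positivity)) ?_
  calc ∑' p : Tuples d X, ENNReal.ofReal (tupleWeight w l'' (g - g') p)
      = ∑' p : Tuples d X,
          (if p.1.2.2 0 ⊆ X then 1 else 0) * pathWeight (stepWeight a) p.1.2.1 p.1.2.2 :=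
        tsum_congr (ofReal_tupleWeight hw l'' hgap)
    _ ≤ _ := ENNReal.tsum_comp_le_tsum_of_injective Subtype.val_injective _
    _ ≤ _ := hpaths
    _ = ENNReal.ofReal (((g - g') / (g - g' - ε) - 1) * 2 ^ X.card) := by
        rw [ENNReal.ofReal_mul' (by positivity), mul_comm, ENNReal.ofReal_pow zero_le_two,
          ENNReal.ofReal_ofNat]

/-- Lemma 2: geometric summability of the expansion weights. -/
theorem lemma_two (d : ℕ) (hd : 1 ≤ d)
    (w : Finset (Site d) → ℝ) (hw : ∀ Γ, 0 ≤ w Γ) (hwempty : w ∅ = 0)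
    (l'' l g g' ε : ℝ) (hl'' : 0 < l'') (hgg' : g' < g)
    (hl : 1 / l = Real.log 2 + 1 / l'')
    (hε : 0 < ε) (hεg : ε < g - g')
    (hsummable : ∀ x : Site d, Summable fun Γ : {Γ : Finset (Site d) // x ∈ Γ} =>
      Real.exp ((Γ.1.card : ℝ) / l) * w Γ.1)
    (hnorm : ∀ x : Site d,
      (∑' Γ : {Γ : Finset (Site d) // x ∈ Γ}, Real.exp ((Γ.1.card : ℝ) / l) * w Γ.1) ≤ ε) :
    ∀ X : Finset (Site d), X.Nonempty →
      Summable (fun p : Tuples d X =>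
        ∏ i : Fin (p.1.1 + 1),
          Real.exp ((p.1.2.1 i).card / l'') * w (p.1.2.1 i) /
            ((g - g') * ((p.1.2.2 i.castSucc).card : ℝ))) ∧
      (∑' p : Tuples d X,
        ∏ i : Fin (p.1.1 + 1),
          Real.exp ((p.1.2.1 i).card / l'') * w (p.1.2.1 i) /
            ((g - g') * ((p.1.2.2 i.castSucc).card : ℝ))) ≤
        ((g - g') / (g - g' - ε) - 1) * 2 ^ X.card :=
  lemma_two_general d w hw l'' l g g' ε hgg' hl hε hεg hsummable hnorm

end QMS
end
end

section
/- Exponential relaxation of the non-interacting product dynamics: for each x let ρ_x be the linear functional on A_{{x}} determined by Q(x)(B) = ρ_x(B)·1, and for a nonempty finite X ⊂ ℤ^d let ρ_{G,X} be the linear functional on A_X determined by (∏_{x∈X} Q(x))(A) = ρ_{G,X}(A)·1. Then for every t ≥ 0 and every A ∈ A_X: ‖e^{t G_X}(A) − ρ_{G,X}(A)·1‖ ≤ 2^{|X|} (M+1)^{|X|} e^{−g t} ‖A‖. -/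
noncomputable section
set_option maxHeartbeats 1000000
set_option synthInstance.maxHeartbeats 400000
open scoped BigOperators ComplexOrder
open Classical

namespace QMS

/-- Classical configurations over a finite volume: one `Fin m` label per site. -/
abbrev Conf (d m : ℕ) (Λ : Finset (Site d)) : Type := ↥Λ → Fin m

/-- The Hilbert space `⊗_{x∈Λ} ℂ^m`, realized as `ℓ²` of configurations. -/
abbrev Hs (d m : ℕ) (Λ : Finset (Site d)) : Type := EuclideanSpace ℂ (Conf d m Λ)

/-- The observable algebra `A_Λ = B(H_Λ)` with the operator norm. -/
abbrev Alg (d m : ℕ) (Λ : Finset (Site d)) : Type := Hs d m Λ →L[ℂ] Hs d m Λ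

/-- Super-operators on `A_Λ`, with the induced operator norm. -/
abbrev Super (d m : ℕ) (Λ : Finset (Site d)) : Type := Alg d m Λ →L[ℂ] Alg d m Λ

/-- The exponential of a continuous linear endomorphism, defined by its power series. -/
def expCLM {E : Type*} [NormedAddCommGroup E] [NormedSpace ℂ E] (T : E →L[ℂ] E) : E →L[ℂ] E :=
  ∑' n : ℕ, ((n.factorial : ℂ))⁻¹ • T ^ n

variable (d m : ℕ)

/-- Matrix entries of an observable in the configuration basis. -/
def toMat {Λ : Finset (Site d)} :
    Alg d m Λ ≃ₗ[ℂ] Matrix (Conf d m Λ) (Conf d m Λ) ℂ :=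
  ((Matrix.toEuclideanLin).trans LinearMap.toContinuousLinearMap).symm

/-- Restriction of a configuration on `Λ` to a subset `S ⊆ Λ`. -/
def restrictConf {S Λ : Finset (Site d)} (hS : S ⊆ Λ) (f : Conf d m Λ) : Conf d m S :=
  fun x => f ⟨x.1, hS x.2⟩

/-- Replace the `S`-part of a configuration on `Λ` by `g`. -/
def combineConf {S Λ : Finset (Site d)} (g : Conf d m S) (f : Conf d m Λ) : Conf d m Λ :=
  fun x => if h : (x : Site d) ∈ S then g ⟨x.1, h⟩ else f x

/-- The canonical embedding `A_S ∋ A ↦ A ⊗ 1 ∈ A_Λ` for `S ⊆ Λ`. -/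
def embedObs {S Λ : Finset (Site d)} (hS : S ⊆ Λ) (A : Alg d m S) : Alg d m Λ :=
  (toMat d m).symm (Matrix.of fun f f' =>
    if ∀ x : ↥Λ, (x : Site d) ∉ S → f x = f' x then
      toMat d m A (restrictConf d m hS f) (restrictConf d m hS f') else 0)

/-- Matrix units of `A_Λ` in the configuration basis. -/
def matUnit {Λ : Finset (Site d)} (g g' : Conf d m Λ) : Alg d m Λ :=
  (toMat d m).symm (Matrix.single g g' 1)

/-- The matrix-level form of the embedding `B(A_S) ∋ O ↦ O ⊗ id ∈ B(A_Λ)`. -/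
def embedSuperMat {S Λ : Finset (Site d)} (hS : S ⊆ Λ) (O : Super d m S) :
    Matrix (Conf d m Λ) (Conf d m Λ) ℂ →ₗ[ℂ] Matrix (Conf d m Λ) (Conf d m Λ) ℂ where
  toFun B := Matrix.of fun f f' =>
    ∑ g : Conf d m S, ∑ g' : Conf d m S,
      toMat d m (O (matUnit d m g g')) (restrictConf d m hS f) (restrictConf d m hS f') *
        B (combineConf d m g f) (combineConf d m g' f')
  map_add' B B' := by
    ext f f'
    simp only [Matrix.of_apply, Matrix.add_apply, mul_add, Finset.sum_add_distrib]
  map_smul' a B := by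
    ext f f'
    simp only [Matrix.of_apply, Matrix.smul_apply, smul_eq_mul, RingHom.id_apply]
    rw [Finset.mul_sum]
    refine Finset.sum_congr rfl fun g _ => ?_
    rw [Finset.mul_sum]
    refine Finset.sum_congr rfl fun g' _ => ?_
    ring

/-- The canonical embedding `B(A_S) ∋ O ↦ O ⊗ id ∈ B(A_Λ)` of super-operators, `S ⊆ Λ`. -/
def embedSuper {S Λ : Finset (Site d)} (hS : S ⊆ Λ) (O : Super d m S) : Super d m Λ :=
  LinearMap.toContinuousLinearMap
    ((toMat d m).symm.toLinearMap ∘ₗ embedSuperMat d m hS O ∘ₗ (toMat d m).toLinearMap)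

/-- Embedding of the interaction term `V(Γ)` into a volume `Λ` (zero unless `Γ ⊆ Λ`). -/
def VembOn (V : ∀ Γ : Finset (Site d), Super d m Γ) (Λ Γ : Finset (Site d)) : Super d m Λ :=
  if h : Γ ⊆ Λ then embedSuper d m h (V Γ) else 0

/-- The free generator `G_Λ := Σ_{x∈Λ} G(x)` acting on `A_Λ`. -/
def Gsum (G : ∀ x : Site d, Super d m {x}) (Λ : Finset (Site d)) : Super d m Λ :=
  ∑ x ∈ Λ.attach, embedSuper d m (Finset.singleton_subset_iff.mpr x.2) (G x.1)

/-- The interacting part `V_Λ := Σ_{Γ⊆Λ} V(Γ)` acting on `A_Λ`. -/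
def Vsum (V : ∀ Γ : Finset (Site d), Super d m Γ) (Λ : Finset (Site d)) : Super d m Λ :=
  ∑ Γ ∈ Λ.powerset.attach, embedSuper d m (Finset.mem_powerset.mp Γ.2) (V Γ.1)

/-- The full generator `L_Λ := G_Λ + V_Λ`. -/
def Ldyn (G : ∀ x : Site d, Super d m {x}) (V : ∀ Γ : Finset (Site d), Super d m Γ)
    (Λ : Finset (Site d)) : Super d m Λ :=
  Gsum d m G Λ + Vsum d m V Λ

/-- The projection `P_Λ(E) = ∏_{x∈E}(id−Q_x) ∘ ∏_{x∈Λ∖E} Q_x` (all factors commute). -/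
def Pproj (Q : ∀ x : Site d, Super d m {x}) (Λ E : Finset (Site d)) : Super d m Λ :=
  (Λ.attach.toList.map fun x : ↥Λ =>
    if (x : Site d) ∈ E then
      (1 : Super d m Λ) - embedSuper d m (Finset.singleton_subset_iff.mpr x.2) (Q x.1)
    else embedSuper d m (Finset.singleton_subset_iff.mpr x.2) (Q x.1)).prod

/-- `ℓ¹` (= nearest-neighbour graph) distance between two sites of `ℤ^d`. -/
def siteDist {d : ℕ} (x y : Site d) : ℕ := ∑ i, (x i - y i).natAbs

/-- Distance between two sets of sites. -/
def setDist {d : ℕ} (X Y : Set (Site d)) : ℕ :=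
  sInf {n : ℕ | ∃ x ∈ X, ∃ y ∈ Y, siteDist x y = n}

/-- The nearest-neighbour graph of `ℤ^d`. -/
def latticeGraph (d : ℕ) : SimpleGraph (Site d) where
  Adj x y := siteDist x y = 1
  symm := by
    constructor
    intro x y h
    have e : ∀ i, (y i - x i).natAbs = (x i - y i).natAbs := fun i => by
      rw [← Int.natAbs_neg, neg_sub]
    simp only [siteDist] at h ⊢
    simpa only [e] using h
  loopless := by
    constructor
    intro x h
    simp [siteDist, sub_self] at h

/-- Connectedness of a finite set of sites in the nearest-neighbour graph of `ℤ^d`. -/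
def IsConnectedFinset {d : ℕ} (Γ : Finset (Site d)) : Prop :=
  ((latticeGraph d).induce (Γ : Set (Site d))).Preconnected

/-- The completely bounded norm of a super-operator supported in `S`:
the supremum of the norms of its embeddings into larger volumes. -/
def cbNorm {S : Finset (Site d)} (O : Super d m S) : ℝ :=
  ⨆ Λ : {Λ : Finset (Site d) // S ⊆ Λ}, ‖embedSuper d m Λ.2 O‖

/-- The interaction norm `|||V|||_l`. -/
def intNorm (V : ∀ Γ : Finset (Site d), Super d m Γ) (l : ℝ) : ℝ :=
  ⨆ x : Site d, ∑' Γ : {Γ : Finset (Site d) // x ∈ Γ},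
    Real.exp ((Γ.1.card : ℝ) / l) * cbNorm d m (V Γ.1)

/-- A state on `A_Λ`: a normalized positive linear functional. -/
def IsState {Λ : Finset (Site d)} (ρ : Alg d m Λ →ₗ[ℂ] ℂ) : Prop :=
  ρ 1 = 1 ∧ ∀ A : Alg d m Λ, A.IsPositive → 0 ≤ ρ A

/-- A positive map on `A_Λ` maps positive semidefinite elements to positive semidefinite ones. -/
def IsPositiveMap {Λ : Finset (Site d)} (T : Super d m Λ) : Prop :=
  ∀ A : Alg d m Λ, A.IsPositive → (T A).IsPositive

/-- The iterated time-ordered chain of the Dyson expansion: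
`chainOp k u = ∫_{0≤t₁≤⋯≤t_k≤u} e^{(u−t_k)G}P(E_k)V(Γ_{k-1}) ⋯ V(Γ_0)e^{t₁G}P(E_0) dt`. -/
def chainOp {Λ : Finset (Site d)} (GΛ : Super d m Λ) (PE VΓ : ℕ → Super d m Λ) :
    ℕ → ℝ → Super d m Λ
  | 0, u => expCLM (u • GΛ) ∘L PE 0
  | (k + 1), u => ∫ r in (0:ℝ)..u,
      (expCLM ((u - r) • GΛ) ∘L PE (k + 1) ∘L VΓ k) ∘L chainOp GΛ PE VΓ k r

/-- The expansion term `H_t(s, Γ, E, ·)` of the paper (with `0`-based indexing: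
`Γ 0, …, Γ (n-1)` are the paper's `Γ_1, …, Γ_n` and `E 0, …, E n` the paper's
`E_1, …, E_{n+1}`), as a super-operator on `A_Λ`. -/
def Hterm (G Q : ∀ x : Site d, Super d m {x}) (V : ∀ Γ : Finset (Site d), Super d m Γ)
    (Λ : Finset (Site d)) (n : ℕ) (Γ E : ℕ → Finset (Site d)) (t s : ℝ) : Super d m Λ :=
  (expCLM ((t - s) • Gsum d m G Λ) ∘L Pproj d m Q Λ (E n) ∘L
      VembOn d m V Λ (Γ (n - 1))) ∘L
    chainOp d m (Gsum d m G Λ) (fun i => Pproj d m Q Λ (E i)) (fun i => VembOn d m V Λ (Γ i))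
      (n - 1) s

/-! The single-site generators act on disjoint sites and commute, so `e^{t G_X}` factors as
`∏ₓ e^{t G(x)}`. Since `G(x) Q(x) = 0`, each factor satisfies
`e^{t G(x)} - Q(x) = e^{t G(x)} (1 - Q(x))`, of norm at most `M e^{-g t}`. Replacing the
factors one at a time by the contractions `Q(x)` then moves the product by at most
`(1 + M e^{-g t})^{|X|} - 1 ≤ e^{-g t} ((1 + M)^{|X|} - 1)` (convexity of `s ↦ s^{|X|}`),
and `∏ₓ Q(x)` maps `A` to `ρ_{G,X}(A) 1`. -/

section OperatorExponential

variable {E : Type*} [NormedAddCommGroup E] [NormedSpace ℂ E]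

theorem expCLM_eq_exp (T : E →L[ℂ] E) : expCLM T = NormedSpace.exp T := by
  rw [NormedSpace.exp_eq_tsum ℂ]
  rfl

variable [CompleteSpace E]

theorem expCLM_add_of_commute {a b : E →L[ℂ] E} (h : Commute a b) :
    expCLM (a + b) = expCLM a * expCLM b := by
  have h_ball : ∀ c : E →L[ℂ] E, c ∈ Metric.eball 0 (NormedSpace.expSeries ℂ (E →L[ℂ] E)).radius :=
    fun c => (NormedSpace.expSeries_radius_eq_top ℂ (E →L[ℂ] E)).symm ▸ edist_lt_top _ _
  simp only [expCLM_eq_exp]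
  exact NormedSpace.exp_add_of_commute_of_mem_ball h (h_ball a) (h_ball b)

theorem expCLM_list_sum {l : List (E →L[ℂ] E)} (h : l.Pairwise Commute) :
    expCLM l.sum = (l.map expCLM).prod := by
  induction l with
  | nil => simp [expCLM_eq_exp]
  | cons a l ih =>
    obtain ⟨ha, hl⟩ := List.pairwise_cons.mp h
    rw [List.sum_cons, List.map_cons, List.prod_cons,
      expCLM_add_of_commute (Commute.list_sum_right a l ha), ih hl]

theorem expCLM_smul_sum_of_pairwise_commute {ι : Type*} (s : Finset ι) (t : ℝ)
    (f : ι → E →L[ℂ] E) (h : (s : Set ι).Pairwise fun i j => Commute (f i) (f j)) :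
    expCLM (t • ∑ i ∈ s, f i) = (s.toList.map fun i => expCLM (t • f i)).prod := by
  rw [Finset.smul_sum, ← Finset.sum_map_toList, expCLM_list_sum, List.map_map]
  · rfl
  · refine List.pairwise_map.mpr (s.nodup_toList.imp_of_mem fun hi hj hij => ?_)
    exact ((h (Finset.mem_toList.mp hi) (Finset.mem_toList.mp hj) hij).smul_left t).smul_right t

theorem expCLM_mul_eq_self_of_mul_eq_zero {a b : E →L[ℂ] E} (h : a * b = 0) :
    expCLM a * b = b := by
  have h_terms : ∀ n ≠ 0, ((n.factorial : ℂ))⁻¹ • a ^ n * b = 0 := by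
    intro n hn
    obtain ⟨k, rfl⟩ := Nat.exists_eq_succ_of_ne_zero hn
    rw [smul_mul_assoc, pow_succ, mul_assoc, h, mul_zero, smul_zero]
  have h_sum : HasSum (fun n : ℕ => ((n.factorial : ℂ))⁻¹ • a ^ n * b) b := by
    simpa using hasSum_single 0 h_terms
  rw [expCLM_eq_exp]
  exact ((NormedSpace.exp_series_hasSum_exp' (𝕂 := ℂ) a).mul_right b).unique h_sum

theorem expCLM_smul_sub_eq_mul_one_sub {a q : E →L[ℂ] E} (h : a * q = 0) (t : ℝ) :
    expCLM (t • a) - q = expCLM (t • a) * (1 - q) := by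
  rw [mul_sub, mul_one, expCLM_mul_eq_self_of_mul_eq_zero (by rw [smul_mul_assoc, h, smul_zero])]

end OperatorExponential

section OperatorProducts

variable {𝕜 E : Type*} [NontriviallyNormedField 𝕜] [NormedAddCommGroup E] [NormedSpace 𝕜 E]

theorem norm_list_prod_le_one {l : List (E →L[𝕜] E)} (h : ∀ a ∈ l, ‖a‖ ≤ 1) : ‖l.prod‖ ≤ 1 := by
  induction l with
  | nil => exact ContinuousLinearMap.norm_id_le
  | cons a l ih =>
    rw [List.prod_cons]
    calc ‖a * l.prod‖ ≤ ‖a‖ * ‖l.prod‖ := norm_mul_le _ _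
      _ ≤ 1 := mul_le_one₀ (h a List.mem_cons_self) (norm_nonneg _)
          (ih fun b hb => h b (List.mem_cons_of_mem a hb))

theorem norm_prod_map_sub_prod_map_le {ι : Type*} (l : List ι) {a c : ι → E →L[𝕜] E} {ε : ℝ}
    (ha : ∀ i, ‖a i‖ ≤ 1) (hca : ∀ i, ‖c i - a i‖ ≤ ε) :
    ‖(l.map c).prod - (l.map a).prod‖ ≤ (1 + ε) ^ l.length - 1 := by
  induction l with
  | nil => simp
  | cons i l ih =>
    have hc : ‖c i‖ ≤ 1 + ε := by
      simpa using (norm_add_le (a i) (c i - a i)).trans (add_le_add (ha i) (hca i))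
    have ha_prod : ‖(l.map a).prod‖ ≤ 1 := by
      refine norm_list_prod_le_one fun b hb => ?_
      obtain ⟨j, -, rfl⟩ := List.mem_map.mp hb
      exact ha j
    have h_split : (c i * (l.map c).prod - a i * (l.map a).prod)
        = c i * ((l.map c).prod - (l.map a).prod) + (c i - a i) * (l.map a).prod := by
      noncomm_ring
    simp only [List.map_cons, List.prod_cons, List.length_cons, h_split]
    calc _ ≤ ‖c i‖ * ‖(l.map c).prod - (l.map a).prod‖ + ‖c i - a i‖ * ‖(l.map a).prod‖ :=
          (norm_add_le _ _).trans (add_le_add (norm_mul_le _ _) (norm_mul_le _ _))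
      _ ≤ (1 + ε) * ((1 + ε) ^ l.length - 1) + ε * 1 :=
          add_le_add (mul_le_mul hc ih (norm_nonneg _) ((norm_nonneg _).trans hc))
            (mul_le_mul (hca i) ha_prod (norm_nonneg _) ((norm_nonneg _).trans (hca i)))
      _ = (1 + ε) ^ (l.length + 1) - 1 := by ring

end OperatorProducts

theorem one_add_mul_pow_sub_one_le {M δ : ℝ} (hM : 0 ≤ M) (hδ₀ : 0 ≤ δ) (hδ₁ : δ ≤ 1) (n : ℕ) :
    (1 + M * δ) ^ n - 1 ≤ δ * ((1 + M) ^ n - 1) := by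
  have h_conv := (convexOn_pow (𝕜 := ℝ) n).2 (Set.mem_Ici.mpr zero_le_one)
    (Set.mem_Ici.mpr (by linarith : (0 : ℝ) ≤ 1 + M)) (by linarith : 0 ≤ 1 - δ) hδ₀
    (sub_add_cancel 1 δ)
  simp only [smul_eq_mul, one_pow, mul_one] at h_conv
  rw [show 1 - δ + δ * (1 + M) = 1 + M * δ by ring] at h_conv
  linarith

section Embedding

variable {d m}

theorem restrictConf_combineConf {S Λ : Finset (Site d)} (hS : S ⊆ Λ) (g : Conf d m S)
    (f : Conf d m Λ) : restrictConf d m hS (combineConf d m g f) = g := by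
  funext x
  simp [restrictConf, combineConf, x.2]

theorem restrictConf_combineConf_of_disjoint {S T Λ : Finset (Site d)} (hT : T ⊆ Λ)
    (hST : Disjoint S T) (g : Conf d m S) (f : Conf d m Λ) :
    restrictConf d m hT (combineConf d m g f) = restrictConf d m hT f := by
  funext x
  simp [restrictConf, combineConf, Finset.disjoint_right.mp hST x.2]

theorem combineConf_combineConf {S Λ : Finset (Site d)} (g h : Conf d m S) (f : Conf d m Λ) :
    combineConf d m g (combineConf d m h f) = combineConf d m g f := by
  funext x
  by_cases hx : (x : Site d) ∈ S <;> simp [combineConf, hx]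

theorem combineConf_comm {S T Λ : Finset (Site d)} (hST : Disjoint S T)
    (g : Conf d m S) (h : Conf d m T) (f : Conf d m Λ) :
    combineConf d m h (combineConf d m g f) = combineConf d m g (combineConf d m h f) := by
  funext x
  by_cases hx : (x : Site d) ∈ S
  · simp [combineConf, hx, Finset.disjoint_left.mp hST hx]
  · by_cases hx' : (x : Site d) ∈ T <;> simp [combineConf, hx, hx']

theorem toMat_apply_eq_sum {Λ : Finset (Site d)} (O : Super d m Λ) (A : Alg d m Λ)
    (p q : Conf d m Λ) :
    toMat d m (O A) p q = ∑ g, ∑ g', toMat d m A g g' * toMat d m (O (matUnit d m g g')) p q := by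
  have hA : A = ∑ g, ∑ g', toMat d m A g g' • matUnit d m g g' := by
    apply (toMat d m).injective
    simp only [map_sum, map_smul, matUnit, LinearEquiv.apply_symm_apply, Matrix.smul_single,
      smul_eq_mul, mul_one]
    exact Matrix.matrix_eq_sum_single _
  conv_lhs => rw [hA]
  simp [Matrix.sum_apply]

theorem toMat_embedSuper_apply {S Λ : Finset (Site d)} (hS : S ⊆ Λ) (O : Super d m S)
    (B : Alg d m Λ) :
    toMat d m (embedSuper d m hS O B) = embedSuperMat d m hS O (toMat d m B) := by
  simp [embedSuper]

theorem sum_sum_sum_sum_comm {α β : Type*} [Fintype α] [Fintype β] (F : α → α → β → β → ℂ) :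
    ∑ g, ∑ g', ∑ h, ∑ h', F g g' h h' = ∑ h, ∑ h', ∑ g, ∑ g', F g g' h h' :=
  calc ∑ g, ∑ g', ∑ h, ∑ h', F g g' h h'
      = ∑ g, ∑ h, ∑ g', ∑ h', F g g' h h' := Finset.sum_congr rfl fun _ _ => Finset.sum_comm
    _ = ∑ h, ∑ g, ∑ g', ∑ h', F g g' h h' := Finset.sum_comm
    _ = ∑ h, ∑ g, ∑ h', ∑ g', F g g' h h' :=
        Finset.sum_congr rfl fun _ _ => Finset.sum_congr rfl fun _ _ => Finset.sum_comm
    _ = ∑ h, ∑ h', ∑ g, ∑ g', F g g' h h' := Finset.sum_congr rfl fun _ _ => Finset.sum_comm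

theorem embedSuperMat_comp {S Λ : Finset (Site d)} (hS : S ⊆ Λ) (O O' : Super d m S)
    (C : Matrix (Conf d m Λ) (Conf d m Λ) ℂ) :
    embedSuperMat d m hS O (embedSuperMat d m hS O' C) = embedSuperMat d m hS (O ∘L O') C := by
  ext f f'
  simp only [embedSuperMat, LinearMap.coe_mk, AddHom.coe_mk, Matrix.of_apply,
    restrictConf_combineConf, combineConf_combineConf, ContinuousLinearMap.comp_apply,
    toMat_apply_eq_sum O (O' (matUnit d m _ _)), Finset.mul_sum, Finset.sum_mul]
  rw [sum_sum_sum_sum_comm]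
  refine Finset.sum_congr rfl fun _ _ => Finset.sum_congr rfl fun _ _ =>
    Finset.sum_congr rfl fun _ _ => Finset.sum_congr rfl fun _ _ => by ring

theorem embedSuperMat_comm {S T Λ : Finset (Site d)} (hS : S ⊆ Λ) (hT : T ⊆ Λ)
    (hST : Disjoint S T) (O : Super d m S) (O' : Super d m T)
    (C : Matrix (Conf d m Λ) (Conf d m Λ) ℂ) :
    embedSuperMat d m hS O (embedSuperMat d m hT O' C)
      = embedSuperMat d m hT O' (embedSuperMat d m hS O C) := by
  ext f f'
  simp only [embedSuperMat, LinearMap.coe_mk, AddHom.coe_mk, Matrix.of_apply,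
    restrictConf_combineConf_of_disjoint hT hST, restrictConf_combineConf_of_disjoint hS hST.symm,
    combineConf_comm hST, Finset.mul_sum]
  rw [sum_sum_sum_sum_comm]
  refine Finset.sum_congr rfl fun _ _ => Finset.sum_congr rfl fun _ _ =>
    Finset.sum_congr rfl fun _ _ => Finset.sum_congr rfl fun _ _ => by ring

theorem embedSuper_comp {S Λ : Finset (Site d)} (hS : S ⊆ Λ) (O O' : Super d m S) :
    embedSuper d m hS (O ∘L O') = embedSuper d m hS O * embedSuper d m hS O' := by
  ext1 B
  apply (toMat d m).injective
  simp only [mul_apply_eq_comp, toMat_embedSuper_apply, embedSuperMat_comp]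

theorem embedSuper_zero {S Λ : Finset (Site d)} (hS : S ⊆ Λ) : embedSuper d m hS 0 = 0 := by
  ext1 B
  apply (toMat d m).injective
  ext f f'
  simp [toMat_embedSuper_apply, embedSuperMat]

theorem embedSuper_commute {S T Λ : Finset (Site d)} (hS : S ⊆ Λ) (hT : T ⊆ Λ)
    (hST : Disjoint S T) (O : Super d m S) (O' : Super d m T) :
    Commute (embedSuper d m hS O) (embedSuper d m hT O') := by
  ext1 B
  apply (toMat d m).injective
  simp only [mul_apply_eq_comp, toMat_embedSuper_apply, embedSuperMat_comm hS hT hST]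

end Embedding

theorem product_dynamics_relaxation_general
    (d m : ℕ)
    (G Q : ∀ x : Site d, Super d m {x})
    (M g : ℝ) (hM : 0 < M) (hg : 0 < g)
    (hGQ : ∀ x : Site d, G x ∘L Q x = 0)
    (hdecay : ∀ (x : Site d) (Λ : Finset (Site d)) (hx : ({x} : Finset (Site d)) ⊆ Λ) (t : ℝ),
      0 ≤ t →
      ‖expCLM (t • embedSuper d m hx (G x)) ∘L (1 - embedSuper d m hx (Q x))‖ ≤
        M * Real.exp (-g * t))
    (hQcb : ∀ (x : Site d) (Λ : Finset (Site d)) (hx : ({x} : Finset (Site d)) ⊆ Λ),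
      ‖embedSuper d m hx (Q x)‖ ≤ 1)
    (X : Finset (Site d))
    (ρGX : Alg d m X →ₗ[ℂ] ℂ)
    (hρGX : ∀ A : Alg d m X,
      (X.attach.toList.map fun x : ↥X =>
        embedSuper d m (Finset.singleton_subset_iff.mpr x.2) (Q x.1)).prod A =
      ρGX A • (1 : Alg d m X)) :
    ∀ t : ℝ, 0 ≤ t → ∀ A : Alg d m X,
      ‖expCLM (t • Gsum d m G X) A - ρGX A • (1 : Alg d m X)‖ ≤
        2 ^ X.card * (M + 1) ^ X.card * Real.exp (-g * t) * ‖A‖ := by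
  intro t ht A
  set δ := Real.exp (-g * t)
  have hδ₀ : 0 ≤ δ := Real.exp_nonneg _
  have hδ₁ : δ ≤ 1 := Real.exp_le_one_iff.mpr (by nlinarith)
  let hx (x : ↥X) : ({x.1} : Finset (Site d)) ⊆ X := Finset.singleton_subset_iff.mpr x.2
  let Ex (x : ↥X) := expCLM (t • embedSuper d m (hx x) (G x))
  let Qx (x : ↥X) := embedSuper d m (hx x) (Q x)
  have h_factor : expCLM (t • Gsum d m G X) = (X.attach.toList.map Ex).prod :=
    expCLM_smul_sum_of_pairwise_commute _ t _ fun x _ y _ hxy => embedSuper_commute _ _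
      (Finset.disjoint_singleton.mpr (Subtype.coe_injective.ne hxy)) _ _
  have h_close (x : ↥X) : ‖Ex x - Qx x‖ ≤ M * δ := by
    rw [expCLM_smul_sub_eq_mul_one_sub (by rw [← embedSuper_comp, hGQ, embedSuper_zero])]
    exact hdecay x X (hx x) t ht
  have h_prod := norm_prod_map_sub_prod_map_le X.attach.toList (fun x => hQcb x X (hx x)) h_close
  rw [Finset.length_toList, Finset.card_attach] at h_prod
  calc ‖expCLM (t • Gsum d m G X) A - ρGX A • (1 : Alg d m X)‖
      = ‖((X.attach.toList.map Ex).prod - (X.attach.toList.map Qx).prod) A‖ := by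
        rw [sub_apply, h_factor, hρGX]
    _ ≤ ((1 + M * δ) ^ X.card - 1) * ‖A‖ := (ContinuousLinearMap.le_opNorm _ _).trans (by gcongr)
    _ ≤ δ * ((1 + M) ^ X.card - 1) * ‖A‖ := by
        gcongr
        exact one_add_mul_pow_sub_one_le hM.le hδ₀ hδ₁ _
    _ ≤ 2 ^ X.card * (M + 1) ^ X.card * δ * ‖A‖ := by
        gcongr ?_ * _
        have h_two : (1 : ℝ) ≤ 2 ^ X.card := one_le_pow₀ one_le_two
        have h_pow : 0 ≤ (M + 1) ^ X.card := by positivity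
        rw [add_comm 1 M]
        nlinarith [mul_nonneg (mul_nonneg hδ₀ h_pow) (sub_nonneg.mpr h_two)]

/-- Exponential relaxation of the non-interacting product dynamics. -/
theorem product_dynamics_relaxation
    (d m : ℕ) (hd : 1 ≤ d) (hm : 1 ≤ m)
    (G Q : ∀ x : Site d, Super d m {x})
    (V : ∀ Γ : Finset (Site d), Super d m Γ)
    (M g : ℝ) (hM : 0 < M) (hg : 0 < g)
    (hQproj : ∀ x : Site d, Q x ∘L Q x = Q x)
    (hQrange : ∀ (x : Site d) (A : Alg d m {x}), ∃ c : ℂ, Q x A = c • (1 : Alg d m {x}))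
    (hQone : ∀ x : Site d, Q x (1 : Alg d m {x}) = 1)
    (hQG : ∀ x : Site d, Q x ∘L G x = 0) (hGQ : ∀ x : Site d, G x ∘L Q x = 0)
    (hdecay : ∀ (x : Site d) (Λ : Finset (Site d)) (hx : ({x} : Finset (Site d)) ⊆ Λ) (t : ℝ),
      0 ≤ t →
      ‖expCLM (t • embedSuper d m hx (G x)) ∘L (1 - embedSuper d m hx (Q x))‖ ≤
        M * Real.exp (-g * t))
    (hQcb : ∀ (x : Site d) (Λ : Finset (Site d)) (hx : ({x} : Finset (Site d)) ⊆ Λ),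
      ‖embedSuper d m hx (Q x)‖ ≤ 1)
    (hVone : ∀ Γ : Finset (Site d), V Γ (1 : Alg d m Γ) = 0)
    (hVconn : ∀ Γ : Finset (Site d), ¬(Γ.Nonempty ∧ IsConnectedFinset Γ) → V Γ = 0)
    (hVcb : ∀ Γ : Finset (Site d), BddAbove (Set.range fun Λ : {Λ : Finset (Site d) // Γ ⊆ Λ} =>
      ‖embedSuper d m Λ.2 (V Γ)‖))
    (ρx : ∀ x : Site d, Alg d m {x} →ₗ[ℂ] ℂ)
    (hρx : ∀ (x : Site d) (B : Alg d m {x}), Q x B = ρx x B • (1 : Alg d m {x}))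
    (X : Finset (Site d)) (hX : X.Nonempty)
    (ρGX : Alg d m X →ₗ[ℂ] ℂ)
    (hρGX : ∀ A : Alg d m X,
      (X.attach.toList.map fun x : ↥X =>
        embedSuper d m (Finset.singleton_subset_iff.mpr x.2) (Q x.1)).prod A =
      ρGX A • (1 : Alg d m X)) :
    ∀ t : ℝ, 0 ≤ t → ∀ A : Alg d m X,
      ‖expCLM (t • Gsum d m G X) A - ρGX A • (1 : Alg d m X)‖ ≤
        2 ^ X.card * (M + 1) ^ X.card * Real.exp (-g * t) * ‖A‖ :=
  product_dynamics_relaxation_general d m G Q M g hM hg hGQ hdecay hQcb X ρGX hρGX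

end QMS
end
end

section
/- Single-step sum bound (inner estimate in the proof of Lemma 2): let w be a function from the finite subsets of ℤ^d to [0,∞) with w(∅) = 0, let l'' > 0 and c > 0, set 1/l := log 2 + 1/l'', and suppose s := sup_{x∈ℤ^d} Σ_{Γ∋x} e^{|Γ|/l} w(Γ) < ∞. Then for every nonempty finite E ⊂ ℤ^d the double sum Σ_{Γ finite, Γ∩E≠∅} Σ_{E' finite, E'∖Γ = E∖Γ} e^{|Γ|/l''} w(Γ) / (c·|E|) — the outer sum over all finite subsets Γ of ℤ^d meeting E and the inner sum over all finite subsets E' of ℤ^d with E'∖Γ = E∖Γ — is summable and bounded above by s/c. -/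
/-!
Fixing `Γ`, the sets `E'` with `E' \ Γ = E \ Γ` are `(E \ Γ) ∪ S` for `S ⊆ Γ`, so the inner sum
contributes a factor `2 ^ |Γ| = exp (|Γ| log 2)`, which turns the weight `exp (|Γ| / l'')` into
`exp (|Γ| / l)`. Every `Γ` meeting `E` contains some `x ∈ E`, so the remaining sum over `Γ` is at
most `∑_{x ∈ E} ∑_{Γ ∋ x} exp (|Γ| / l) w Γ ≤ |E| s`, and the factor `|E|` cancels.
-/

noncomputable section

namespace QMS

open Finset

section Fibers

variable {α : Type*} [DecidableEq α]

def sdiffEqEquivPowerset (E Γ : Finset α) :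
    {E' : Finset α // E' \ Γ = E \ Γ} ≃ Γ.powerset where
  toFun E' := ⟨E'.1 ∩ Γ, mem_powerset.2 inter_subset_right⟩
  invFun S := ⟨(E \ Γ) ∪ S.1, by
    rw [union_sdiff_distrib, Finset.sdiff_idem, sdiff_eq_empty_iff_subset.2 (mem_powerset.1 S.2),
      union_empty]⟩
  left_inv E' := by
    ext1
    conv_rhs => rw [← sdiff_union_inter E'.1 Γ, E'.2]
  right_inv S := by
    ext1
    simp only [union_inter_distrib_right, sdiff_inter_self, empty_union,
      inter_eq_left.2 (mem_powerset.1 S.2)]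

instance (E Γ : Finset α) : Finite {E' : Finset α // E' \ Γ = E \ Γ} :=
  .of_equiv _ (sdiffEqEquivPowerset E Γ).symm

theorem tsum_const_sdiffEq (E Γ : Finset α) (a : ℝ) :
    ∑' _ : {E' : Finset α // E' \ Γ = E \ Γ}, a = 2 ^ #Γ * a := by
  rw [tsum_const, Nat.card_congr (sdiffEqEquivPowerset E Γ), Nat.card_eq_fintype_card,
    Fintype.card_coe, card_powerset, nsmul_eq_mul, Nat.cast_pow, Nat.cast_ofNat]

def pairsEquivSigma (P : Finset α → Prop) (E : Finset α) :
    {p : Finset α × Finset α // P p.1 ∧ p.2 \ p.1 = E \ p.1} ≃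
      Σ Γ : {Γ : Finset α // P Γ}, {E' : Finset α // E' \ Γ.1 = E \ Γ.1} where
  toFun p := ⟨⟨p.1.1, p.2.1⟩, ⟨p.1.2, p.2.2⟩⟩
  invFun q := ⟨(q.1.1, q.2.1), ⟨q.1.2, q.2.2⟩⟩

theorem hasSum_pairs_of_hasSum_two_pow_mul (P : Finset α → Prop) (E : Finset α)
    {g : Finset α → ℝ} (hg : ∀ Γ, 0 ≤ g Γ) {a : ℝ}
    (h : HasSum (fun Γ : {Γ : Finset α // P Γ} => 2 ^ #Γ.1 * g Γ) a) :
    HasSum (fun p : {p : Finset α × Finset α // P p.1 ∧ p.2 \ p.1 = E \ p.1} => g p.1.1) a := by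
  rw [← (pairsEquivSigma P E).symm.hasSum_iff]
  have hfiber (Γ : {Γ : Finset α // P Γ}) :
      ∑' _ : {E' : Finset α // E' \ Γ.1 = E \ Γ.1}, g Γ = 2 ^ #Γ.1 * g Γ :=
    tsum_const_sdiffEq E Γ (g Γ)
  have hsum : Summable fun q : Σ Γ : {Γ : Finset α // P Γ},
      {E' : Finset α // E' \ Γ.1 = E \ Γ.1} => g q.1.1 :=
    (summable_sigma_of_nonneg fun q => hg q.1.1).2
      ⟨fun _ => .of_finite, h.summable.congr fun Γ => (hfiber Γ).symm⟩
  exact hsum.hasSum_iff.2 (by rw [hsum.tsum_sigma, tsum_congr hfiber, h.tsum_eq])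

end Fibers

section UnionBound

variable {α : Type*} {f : Finset α → ℝ} {s : ℝ}

theorem summable_sigma_mem (hf : ∀ Γ, 0 ≤ f Γ)
    (hsum : ∀ x, Summable fun Γ : {Γ : Finset α // x ∈ Γ} => f Γ) (E : Finset α) :
    Summable fun t : Σ x : E, {Γ : Finset α // x.1 ∈ Γ} => f t.2 :=
  (summable_sigma_of_nonneg (f := fun t : Σ x : E, {Γ : Finset α // x.1 ∈ Γ} => f t.2)
    fun t => hf t.2).2 ⟨fun x => hsum x, .of_finite⟩

theorem tsum_sigma_mem_le (hf : ∀ Γ, 0 ≤ f Γ)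
    (hsum : ∀ x, Summable fun Γ : {Γ : Finset α // x ∈ Γ} => f Γ)
    (hs : ∀ x, ∑' Γ : {Γ : Finset α // x ∈ Γ}, f Γ ≤ s) (E : Finset α) :
    ∑' t : Σ x : E, {Γ : Finset α // x.1 ∈ Γ}, f t.2 ≤ #E * s := by
  rw [(summable_sigma_mem hf hsum E).tsum_sigma, tsum_fintype]
  calc ∑ x : E, ∑' Γ : {Γ : Finset α // x.1 ∈ Γ}, f Γ
      ≤ ∑ _x : E, s := sum_le_sum fun x _ => hs x
    _ = #E * s := by simp

variable [DecidableEq α]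

def sigmaMemOfMeets (E : Finset α) :
    {Γ : Finset α // (Γ ∩ E).Nonempty} → Σ x : E, {Γ : Finset α // x.1 ∈ Γ} := fun Γ =>
  ⟨⟨Γ.2.choose, (mem_inter.1 Γ.2.choose_spec).2⟩, ⟨Γ.1, (mem_inter.1 Γ.2.choose_spec).1⟩⟩

theorem sigmaMemOfMeets_injective (E : Finset α) : Function.Injective (sigmaMemOfMeets E) :=
  fun _ _ h => Subtype.ext (congrArg (fun t => t.2.1) h)

theorem summable_meets (hf : ∀ Γ, 0 ≤ f Γ)
    (hsum : ∀ x, Summable fun Γ : {Γ : Finset α // x ∈ Γ} => f Γ) (E : Finset α) :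
    Summable fun Γ : {Γ : Finset α // (Γ ∩ E).Nonempty} => f Γ :=
  (summable_sigma_mem hf hsum E).comp_injective (sigmaMemOfMeets_injective E)

theorem tsum_meets_le_card_mul (hf : ∀ Γ, 0 ≤ f Γ)
    (hsum : ∀ x, Summable fun Γ : {Γ : Finset α // x ∈ Γ} => f Γ)
    (hs : ∀ x, ∑' Γ : {Γ : Finset α // x ∈ Γ}, f Γ ≤ s) (E : Finset α) :
    ∑' Γ : {Γ : Finset α // (Γ ∩ E).Nonempty}, f Γ ≤ #E * s :=
  (Summable.tsum_le_tsum_of_inj _ (sigmaMemOfMeets_injective E) (fun t _ => hf t.2)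
    (fun _ => le_rfl) (summable_meets hf hsum E) (summable_sigma_mem hf hsum E)).trans
    (tsum_sigma_mem_le hf hsum hs E)

end UnionBound

theorem exp_nat_div_eq_two_pow_mul {l l' : ℝ} (hl : 1 / l = Real.log 2 + 1 / l') (n : ℕ) :
    Real.exp (n / l) = 2 ^ n * Real.exp (n / l') := by
  rw [div_eq_mul_one_div, hl, mul_add, ← div_eq_mul_one_div, Real.exp_add, Real.exp_nat_mul,
    Real.exp_log two_pos]

theorem single_step_sum_bound_general (d : ℕ)
    (w : Finset (Site d) → ℝ) (hw : ∀ Γ, 0 ≤ w Γ)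
    (l'' l c : ℝ) (hc : 0 < c)
    (hl : 1 / l = Real.log 2 + 1 / l'')
    (s : ℝ)
    (hsummable : ∀ x : Site d, Summable fun Γ : {Γ : Finset (Site d) // x ∈ Γ} =>
      Real.exp ((Γ.1.card : ℝ) / l) * w Γ.1)
    (hs : ∀ x : Site d,
      (∑' Γ : {Γ : Finset (Site d) // x ∈ Γ}, Real.exp ((Γ.1.card : ℝ) / l) * w Γ.1) ≤ s) :
    ∀ E : Finset (Site d), E.Nonempty →
      Summable (fun p : {p : Finset (Site d) × Finset (Site d) //
            (p.1 ∩ E).Nonempty ∧ p.2 \ p.1 = E \ p.1} =>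
        Real.exp ((p.1.1.card : ℝ) / l'') * w p.1.1 / (c * (E.card : ℝ))) ∧
      (∑' p : {p : Finset (Site d) × Finset (Site d) //
            (p.1 ∩ E).Nonempty ∧ p.2 \ p.1 = E \ p.1},
        Real.exp ((p.1.1.card : ℝ) / l'') * w p.1.1 / (c * (E.card : ℝ))) ≤ s / c := by
  intro E hE
  have hE' : (0 : ℝ) < #E := by exact_mod_cast hE.card_pos
  have hweight (Γ : Finset (Site d)) : 0 ≤ Real.exp (#Γ / l) * w Γ :=
    mul_nonneg (Real.exp_pos _).le (hw Γ)
  have hpairs := hasSum_pairs_of_hasSum_two_pow_mul (fun Γ => (Γ ∩ E).Nonempty) E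
    (g := fun Γ => Real.exp (#Γ / l'') * w Γ / (c * #E))
    (fun Γ => div_nonneg (mul_nonneg (Real.exp_pos _).le (hw Γ)) (by positivity))
    (((summable_meets hweight hsummable E).div_const (c * #E)).hasSum.congr_fun fun Γ => by
      simp only [exp_nat_div_eq_two_pow_mul hl, mul_div_assoc, mul_assoc])
  refine ⟨hpairs.summable, ?_⟩
  rw [hpairs.tsum_eq, tsum_div_const]
  calc (∑' Γ : {Γ : Finset (Site d) // (Γ ∩ E).Nonempty}, Real.exp (#Γ.1 / l) * w Γ) / (c * #E)
      ≤ #E * s / (c * #E) := by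
        gcongr
        exact tsum_meets_le_card_mul hweight hsummable hs E
    _ = s / c := by rw [mul_comm c, mul_div_mul_left s c hE'.ne']

/-- The single-step sum bound in the proof of Lemma 2. -/
theorem single_step_sum_bound (d : ℕ) (hd : 1 ≤ d)
    (w : Finset (Site d) → ℝ) (hw : ∀ Γ, 0 ≤ w Γ) (hwempty : w ∅ = 0)
    (l'' l c : ℝ) (hl'' : 0 < l'') (hc : 0 < c)
    (hl : 1 / l = Real.log 2 + 1 / l'')
    (s : ℝ)
    (hsummable : ∀ x : Site d, Summable fun Γ : {Γ : Finset (Site d) // x ∈ Γ} =>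
      Real.exp ((Γ.1.card : ℝ) / l) * w Γ.1)
    (hs : ∀ x : Site d,
      (∑' Γ : {Γ : Finset (Site d) // x ∈ Γ}, Real.exp ((Γ.1.card : ℝ) / l) * w Γ.1) ≤ s) :
    ∀ E : Finset (Site d), E.Nonempty →
      Summable (fun p : {p : Finset (Site d) × Finset (Site d) //
            (p.1 ∩ E).Nonempty ∧ p.2 \ p.1 = E \ p.1} =>
        Real.exp ((p.1.1.card : ℝ) / l'') * w p.1.1 / (c * (E.card : ℝ))) ∧
      (∑' p : {p : Finset (Site d) × Finset (Site d) //
            (p.1 ∩ E).Nonempty ∧ p.2 \ p.1 = E \ p.1},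
        Real.exp ((p.1.1.card : ℝ) / l'') * w p.1.1 / (c * (E.card : ℝ))) ≤ s / c :=
  single_step_sum_bound_general d w hw l'' l c hc hl s hsummable hs

end QMS
end
end
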